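/- For every m ≥ 2, the inductively defined m-linear form T_m on (ℝ^{2^{m−1}})^m satisfies the coefficient-sum identity Σ_{i₁,…,i_m=1}^{2^{m−1}} |T_m(e_{i₁},…,e_{i_m})|^{2m/(m+1)} = 4^{m−1}, since each nonzero coefficient has absolute value 1 and there are exactly 4^{m−1} of them. -/
import Mathlib

def bshift (p : ℕ) (a : ℕ → ℝ) : ℕ → ℝ := fun i => a (i + p)

def Tm : ℕ → (ℕ → ℕ → ℝ) → ℝ
  | 0, _ => 0
  | 1, _ => 0
  | 2, x => x 0 0 * x 1 0 + x 0 0 * x 1 1 + x 0 1 * x 1 0 - x 0 1 * x 1 1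
  | (n + 3), x =>
      (x (n + 2) 0 + x (n + 2) 1) * Tm (n + 2) x
        + (x (n + 2) 0 - x (n + 2) 1) *
          Tm (n + 2) (fun j => bshift (if j = 0 then 2 ^ (n + 1) else 2 ^ (n + 2 - j)) (x j))

/-! Auxiliary development -/

/-- delta vectors -/
def dd (i : ℕ → ℕ) : ℕ → ℕ → ℝ := fun k j => if j = i k then 1 else 0

/-- coefficient of the multilinear form -/
def cf (m : ℕ) (i : ℕ → ℕ) : ℝ := Tm m (dd i)

/-- the shift amounts -/
def sh (n : ℕ) : ℕ → ℕ := fun j => if j = 0 then 2 ^ (n + 1) else 2 ^ (n + 2 - j)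

/-- reading ranges -/
def rr (m : ℕ) : ℕ → ℕ := fun k => if k = 0 then 2 ^ (m - 1) else 2 ^ (m - k)

lemma Tm_congr (m : ℕ) : ∀ (x y : ℕ → ℕ → ℝ), (∀ k < m, x k = y k) → Tm m x = Tm m y := by
  induction m using Nat.strong_induction_on with
  | _ m ih =>
    match m with
    | 0 => intro x y h; rfl
    | 1 => intro x y h; rfl
    | 2 =>
      intro x y h
      have h0 := h 0 (by omega); have h1 := h 1 (by omega)
      simp only [Tm, h0, h1]
    | (n+3) =>
      intro x y h
      rw [Tm, Tm]
      have e1 := ih (n+2) (by omega) x y (fun k hk => h k (by omega))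
      have e2 := ih (n+2) (by omega)
        (fun j => bshift (if j = 0 then 2 ^ (n + 1) else 2 ^ (n + 2 - j)) (x j))
        (fun j => bshift (if j = 0 then 2 ^ (n + 1) else 2 ^ (n + 2 - j)) (y j))
        (fun k hk => by
          show bshift (if k = 0 then 2 ^ (n + 1) else 2 ^ (n + 2 - k)) (x k)
            = bshift (if k = 0 then 2 ^ (n + 1) else 2 ^ (n + 2 - k)) (y k)
          rw [h k (by omega)])
      rw [h (n+2) (by omega), e1, e2]

lemma Tm_zero (m : ℕ) : ∀ (x : ℕ → ℕ → ℝ) (k : ℕ), k < m → x k = (fun _ => 0) → Tm m x = 0 := by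
  induction m using Nat.strong_induction_on with
  | _ m ih =>
    match m with
    | 0 => intro x k hk; omega
    | 1 => intro x k hk hx; rfl
    | 2 =>
      intro x k hk hx
      interval_cases k <;> simp [Tm, hx]
    | (n+3) =>
      intro x k hk hx
      rw [Tm]
      rcases Nat.lt_or_ge k (n+2) with h | h
      · rw [ih (n+2) (by omega) x k h hx,
          ih (n+2) (by omega) _ k h (by rw [hx]; funext j; simp [bshift])]
        ring
      · have : k = n + 2 := by omega
        subst this
        rw [hx]; simp

lemma cf_congr {m : ℕ} {i i' : ℕ → ℕ} (h : ∀ k < m, i k = i' k) : cf m i = cf m i' :=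
  Tm_congr m _ _ (fun k hk => by funext j; simp only [dd, h k hk])

/-- second term in the recurrence -/
def c2 (n : ℕ) (i : ℕ → ℕ) : ℝ := Tm (n+2) (fun j => bshift (sh n j) (dd i j))

lemma c2_congr {n : ℕ} {i i' : ℕ → ℕ} (h : ∀ k < n + 2, i k = i' k) : c2 n i = c2 n i' :=
  Tm_congr (n+2) _ _ (fun k hk => by funext j; simp only [bshift, dd, h k hk])

lemma c2_eq_of_le {n : ℕ} {i : ℕ → ℕ} (h : ∀ j < n + 2, sh n j ≤ i j) :
    c2 n i = cf (n+2) (fun j => i j - sh n j) := by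
  apply Tm_congr
  intro k hk
  funext j'
  have hs := h k hk
  have hiff : (j' + sh n k = i k) ↔ (j' = i k - sh n k) := by omega
  simp only [bshift, dd]
  rw [if_congr hiff rfl rfl]

lemma c2_eq_zero {n : ℕ} {i : ℕ → ℕ} {j : ℕ} (hj : j < n + 2) (h : i j < sh n j) :
    c2 n i = 0 := by
  apply Tm_zero (n+2) _ j hj
  funext j'
  simp only [bshift, dd]
  rw [if_neg (by omega)]

lemma cf_rec0 {n : ℕ} {i : ℕ → ℕ} (h : i (n+2) = 0) :
    cf (n+3) i = cf (n+2) i + c2 n i := by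
  unfold cf c2 sh
  rw [Tm]
  have h0 : dd i (n+2) 0 = 1 := by simp [dd, h]
  have h1 : dd i (n+2) 1 = 0 := by simp [dd, h]
  rw [h0, h1]
  ring

lemma cf_rec1 {n : ℕ} {i : ℕ → ℕ} (h : i (n+2) = 1) :
    cf (n+3) i = cf (n+2) i - c2 n i := by
  unfold cf c2 sh
  rw [Tm]
  have h0 : dd i (n+2) 0 = 0 := by simp [dd, h]
  have h1 : dd i (n+2) 1 = 1 := by simp [dd, h]
  rw [h0, h1]
  ring

lemma cf_rec_big {n : ℕ} {i : ℕ → ℕ} (h : 2 ≤ i (n+2)) :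
    cf (n+3) i = 0 := by
  unfold cf
  rw [Tm]
  have h0 : dd i (n+2) 0 = 0 := by simp only [dd]; rw [if_neg (by omega)]
  have h1 : dd i (n+2) 1 = 0 := by simp only [dd]; rw [if_neg (by omega)]
  rw [h0, h1]; ring

lemma rr_mono {n k : ℕ} (hk : k < n + 2) : rr (n+2) k ≤ rr (n+3) k := by
  unfold rr
  split
  · exact Nat.pow_le_pow_right (by norm_num) (by omega)
  · exact Nat.pow_le_pow_right (by norm_num) (by omega)

lemma rr_add {n k : ℕ} (hk : k < n + 2) : sh n k + rr (n+2) k = rr (n+3) k := by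
  unfold rr sh
  rcases eq_or_ne k 0 with rfl | h
  · rw [if_pos rfl, if_pos rfl, if_pos rfl]
    have e1 : n + 2 - 1 = n + 1 := by omega
    have e2 : n + 3 - 1 = (n + 1) + 1 := by omega
    rw [e1, e2, pow_succ]
    omega
  · rw [if_neg h, if_neg h, if_neg h]
    have e2 : n + 3 - k = (n + 2 - k) + 1 := by omega
    rw [e2, pow_succ]
    omega

lemma rr_le {n k : ℕ} (hk : k < n + 2) : rr (n+2) k ≤ 2 ^ (n+1) := by
  unfold rr
  split
  · exact Nat.pow_le_pow_right (by norm_num) (by omega)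
  · exact Nat.pow_le_pow_right (by norm_num) (by omega)

lemma cf_two_eval (i : ℕ → ℕ) : cf 2 i =
    (if 0 = i 0 then (1:ℝ) else 0) * (if 0 = i 1 then 1 else 0)
    + (if 0 = i 0 then (1:ℝ) else 0) * (if 1 = i 1 then 1 else 0)
    + (if 1 = i 0 then (1:ℝ) else 0) * (if 0 = i 1 then 1 else 0)
    - (if 1 = i 0 then (1:ℝ) else 0) * (if 1 = i 1 then 1 else 0) := rfl

lemma cf_supp : ∀ n (i : ℕ → ℕ), cf (n+2) i ≠ 0 → ∀ k < n + 2, i k < rr (n+2) k := by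
  intro n
  induction n with
  | zero =>
    intro i hne k hk
    by_contra hge
    push_neg at hge
    apply hne
    interval_cases k
    · have hr : rr (0+2) 0 = 2 := by unfold rr; norm_num
      have hge' : 2 ≤ i 0 := by omega
      have e0 : ¬((0:ℕ) = i 0) := by omega
      have e1 : ¬((1:ℕ) = i 0) := by omega
      rw [cf_two_eval, if_neg e0, if_neg e1]; ring
    · have hr : rr (0+2) 1 = 2 := by unfold rr; norm_num
      have hge' : 2 ≤ i 1 := by omega
      have e0 : ¬((0:ℕ) = i 1) := by omega
      have e1 : ¬((1:ℕ) = i 1) := by omega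
      rw [cf_two_eval, if_neg e0, if_neg e1]; ring
  | succ n IH =>
    intro i hne k hk
    have hbig : i (n+2) < 2 := by
      by_contra hb
      exact hne (cf_rec_big (by omega))
    rcases Nat.lt_or_ge k (n+2) with hklt | hkge
    · -- k < n+2
      have key : cf (n+2) i ≠ 0 ∨ c2 n i ≠ 0 := by
        by_contra hc
        push_neg at hc
        apply hne
        rcases (by omega : i (n+2) = 0 ∨ i (n+2) = 1) with h | h
        · rw [cf_rec0 h, hc.1, hc.2]; ring
        · rw [cf_rec1 h, hc.1, hc.2]; ring
      rcases key with hc | hc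
      · exact lt_of_lt_of_le (IH i hc k hklt) (rr_mono hklt)
      · have hall : ∀ j < n + 2, sh n j ≤ i j := by
          by_contra hj
          push_neg at hj
          obtain ⟨j, hj1, hj2⟩ := hj
          exact hc (c2_eq_zero hj1 hj2)
        rw [c2_eq_of_le hall] at hc
        have h1 := IH _ hc k hklt
        have h2 := rr_add (n := n) hklt
        have h3 := hall k hklt
        have h4 : rr (n+1+2) k = rr (n+3) k := rfl
        omega
    · -- k = n+2
      have hke : k = n + 2 := by omega
      subst hke
      have h4 : rr (n+1+2) (n+2) = 2 := by
        unfold rr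
        rw [if_neg (by omega)]
        have e : n + 1 + 2 - (n + 2) = 1 := by omega
        rw [e, pow_one]
      omega

lemma cf_mul_c2 (n : ℕ) (i : ℕ → ℕ) : cf (n+2) i * c2 n i = 0 := by
  by_cases h : cf (n+2) i = 0
  · rw [h]; ring
  · have h0 := cf_supp n i h 0 (by omega)
    have hr : rr (n+2) 0 = sh n 0 := by
      unfold rr sh
      norm_num
    rw [c2_eq_zero (show 0 < n + 2 by omega) (by omega)]
    ring

lemma cf_two_val (i : ℕ → ℕ) : cf 2 i = 0 ∨ cf 2 i = 1 ∨ cf 2 i = -1 := by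
  by_cases hne : cf 2 i = 0
  · left; exact hne
  · right
    have h0 := cf_supp 0 i hne 0 (by omega)
    have h1 := cf_supp 0 i hne 1 (by omega)
    have r0 : rr 2 0 = 2 := by unfold rr; norm_num
    have r1 : rr 2 1 = 2 := by unfold rr; norm_num
    rw [r0] at h0; rw [r1] at h1
    rw [cf_two_eval]
    have e0 : i 0 = 0 ∨ i 0 = 1 := by omega
    have e1 : i 1 = 0 ∨ i 1 = 1 := by omega
    rcases e0 with e0 | e0 <;> rcases e1 with e1 | e1 <;>
      simp [e0, e1]

lemma cf_val : ∀ n (i : ℕ → ℕ), cf (n+2) i = 0 ∨ cf (n+2) i = 1 ∨ cf (n+2) i = -1 := by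
  intro n
  induction n with
  | zero => exact cf_two_val
  | succ n IH =>
    intro i
    have hc2 : c2 n i = 0 ∨ c2 n i = 1 ∨ c2 n i = -1 := by
      by_cases hall : ∀ j < n + 2, sh n j ≤ i j
      · rw [c2_eq_of_le hall]; exact IH _
      · push_neg at hall
        obtain ⟨j, hj1, hj2⟩ := hall
        left; exact c2_eq_zero hj1 hj2
    rcases Nat.lt_or_ge (i (n+2)) 2 with hb | hb
    · have hz := cf_mul_c2 n i
      rcases mul_eq_zero.mp hz with hz | hz
      · rcases (by omega : i (n+2) = 0 ∨ i (n+2) = 1) with h | h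
        · rw [cf_rec0 h, hz]
          rcases hc2 with h' | h' | h' <;> rw [h'] <;> norm_num
        · rw [cf_rec1 h, hz]
          rcases hc2 with h' | h' | h' <;> rw [h'] <;> norm_num
      · rcases (by omega : i (n+2) = 0 ∨ i (n+2) = 1) with h | h
        · rw [cf_rec0 h, hz]
          rcases IH i with h' | h' | h' <;> rw [h'] <;> norm_num
        · rw [cf_rec1 h, hz]
          rcases IH i with h' | h' | h' <;> rw [h'] <;> norm_num
    · left; exact cf_rec_big hb

/-! Sums over boxes -/

def boxSum : ℕ → (ℕ → ℕ) → ((ℕ → ℕ) → ℝ) → ℝ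
  | 0, _, f => f (fun _ => 0)
  | (m+1), M, f => ∑ t ∈ Finset.range (M m), boxSum m M (fun i => f (Function.update i m t))

lemma boxSum_zero (m : ℕ) (M : ℕ → ℕ) : boxSum m M (fun _ => 0) = 0 := by
  induction m generalizing M with
  | zero => rfl
  | succ m ih => simp [boxSum, ih]

lemma boxSum_add (m : ℕ) (M : ℕ → ℕ) (f g : (ℕ → ℕ) → ℝ) :
    boxSum m M (fun i => f i + g i) = boxSum m M f + boxSum m M g := by
  induction m generalizing f g with
  | zero => rfl
  | succ m ih => simp [boxSum, ih, Finset.sum_add_distrib]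

lemma range_shift_sum (M s : ℕ) (H : ℕ → ℝ) :
    ∑ t ∈ Finset.range M, (if s ≤ t then H (t - s) else 0) = ∑ u ∈ Finset.range (M - s), H u := by
  rw [← Finset.sum_filter]
  have e : (Finset.range M).filter (fun t => s ≤ t) = Finset.Ico s M := by
    ext t
    simp only [Finset.mem_filter, Finset.mem_range, Finset.mem_Ico]
    omega
  rw [e, Finset.sum_Ico_eq_sum_range]
  apply Finset.sum_congr rfl
  intro u _
  congr 1
  omega

lemma boxSum_shift (s : ℕ → ℕ) : ∀ (m : ℕ) (M : ℕ → ℕ) (f : (ℕ → ℕ) → ℝ),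
    boxSum m M (fun i => if ∀ k < m, s k ≤ i k then f (fun k => i k - s k) else 0)
      = boxSum m (fun k => M k - s k) f := by
  intro m
  induction m with
  | zero =>
    intro M f
    show (if ∀ k < 0, s k ≤ (fun _ => 0) k then f (fun k => (fun _ => 0) k - s k) else 0)
      = f (fun _ => 0)
    rw [if_pos (fun k hk => absurd hk (Nat.not_lt_zero k))]
    congr 1
    funext k
    show (0:ℕ) - s k = 0
    omega
  | succ m ih =>
    intro M f
    show (∑ t ∈ Finset.range (M m), _) = ∑ t ∈ Finset.range (M m - s m), _
    rw [← range_shift_sum (M m) (s m)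
      (fun u => boxSum m (fun k => M k - s k) (fun i => f (Function.update i m u)))]
    apply Finset.sum_congr rfl
    intro t _
    by_cases ht : s m ≤ t
    · rw [if_pos ht]
      rw [← ih M (fun i => f (Function.update i m (t - s m)))]
      apply congrArg
      funext i
      show (if ∀ k < m + 1, s k ≤ Function.update i m t k then
          f (fun k => Function.update i m t k - s k) else 0)
        = if ∀ k < m, s k ≤ i k then f (Function.update (fun k => i k - s k) m (t - s m)) else 0
      have hcond : (∀ k < m + 1, s k ≤ Function.update i m t k) ↔ (∀ k < m, s k ≤ i k) := by
        constructor
        · intro h k hk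
          have := h k (by omega)
          rwa [Function.update_of_ne (by omega)] at this
        · intro h k hk
          rcases eq_or_ne k m with rfl | hne
          · rwa [Function.update_self]
          · rw [Function.update_of_ne hne]; exact h k (by omega)
      by_cases hc : ∀ k < m, s k ≤ i k
      · rw [if_pos (hcond.mpr hc), if_pos hc]
        apply congrArg
        funext k
        rcases eq_or_ne k m with rfl | hne
        · rw [Function.update_self, Function.update_self]
        · rw [Function.update_of_ne hne, Function.update_of_ne hne]
      · rw [if_neg (fun h => hc (hcond.mp h)), if_neg hc]
    · rw [if_neg ht]
      have e : (fun i => if ∀ k < m + 1, s k ≤ Function.update i m t k then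
          f (fun k => Function.update i m t k - s k) else 0) = (fun _ => (0:ℝ)) := by
        funext i
        rw [if_neg]
        intro h
        have := h m (by omega)
        rw [Function.update_self] at this
        omega
      rw [e, boxSum_zero]

lemma cf_count : ∀ n (M : ℕ → ℕ), (∀ k < n + 2, rr (n+2) k ≤ M k) →
    boxSum (n+2) M (fun i => (cf (n+2) i)^2) = 4^(n+1) := by
  intro n
  induction n with
  | zero =>
    intro M hM
    have r0 : rr (0+2) 0 = 2 := by unfold rr; norm_num
    have r1 : rr (0+2) 1 = 2 := by unfold rr; norm_num
    have hM0 : 2 ≤ M 0 := by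
      have h0 := hM 0 (by omega)
      omega
    have hM1 : 2 ≤ M 1 := by
      have h1 := hM 1 (by omega)
      omega
    show (∑ t1 ∈ Finset.range (M 1), ∑ t0 ∈ Finset.range (M 0),
      (cf 2 (Function.update (Function.update (fun _ => 0) 0 t0) 1 t1))^2) = 4^1
    have hzero : ∀ t0 t1 : ℕ, 2 ≤ t0 ∨ 2 ≤ t1 →
        cf 2 (Function.update (Function.update (fun _ => 0) 0 t0) 1 t1) = 0 := by
      intro t0 t1 h
      set j : ℕ → ℕ := Function.update (Function.update (fun _ => 0) 0 t0) 1 t1 with hj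
      have hj0 : j 0 = t0 := by
        rw [hj, Function.update_of_ne (by norm_num), Function.update_self]
      have hj1 : j 1 = t1 := by rw [hj, Function.update_self]
      by_contra hne
      have s0 := cf_supp 0 j hne 0 (by omega)
      have s1 := cf_supp 0 j hne 1 (by omega)
      omega
    have inner : ∀ t1 : ℕ, ∑ t0 ∈ Finset.range (M 0),
        (cf 2 (Function.update (Function.update (fun _ => 0) 0 t0) 1 t1))^2
        = ∑ t0 ∈ Finset.range 2,
        (cf 2 (Function.update (Function.update (fun _ => 0) 0 t0) 1 t1))^2 := by
      intro t1
      symm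
      apply Finset.sum_subset (Finset.range_subset_range.mpr (by omega))
      intro t0 _ h0
      simp only [Finset.mem_range, not_lt] at h0
      rw [hzero t0 t1 (Or.inl h0)]
      ring
    have outer : ∑ t1 ∈ Finset.range (M 1), ∑ t0 ∈ Finset.range 2,
        (cf 2 (Function.update (Function.update (fun _ => 0) 0 t0) 1 t1))^2
        = ∑ t1 ∈ Finset.range 2, ∑ t0 ∈ Finset.range 2,
        (cf 2 (Function.update (Function.update (fun _ => 0) 0 t0) 1 t1))^2 := by
      symm
      apply Finset.sum_subset (Finset.range_subset_range.mpr (by omega))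
      intro t1 _ h1
      simp only [Finset.mem_range, not_lt] at h1
      apply Finset.sum_eq_zero
      intro t0 _
      rw [hzero t0 t1 (Or.inr h1)]
      ring
    have hval : ∀ t0 t1 : ℕ,
        cf 2 (Function.update (Function.update (fun _ => 0) 0 t0) 1 t1)
        = (if 0 = t0 then (1:ℝ) else 0) * (if 0 = t1 then 1 else 0)
          + (if 0 = t0 then (1:ℝ) else 0) * (if 1 = t1 then 1 else 0)
          + (if 1 = t0 then (1:ℝ) else 0) * (if 0 = t1 then 1 else 0)
          - (if 1 = t0 then (1:ℝ) else 0) * (if 1 = t1 then 1 else 0) := by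
      intro t0 t1
      rw [cf_two_eval]
      have hj0 : (Function.update (Function.update (fun _ => 0) 0 t0) 1 t1 : ℕ → ℕ) 0 = t0 := by
        rw [Function.update_of_ne (by norm_num), Function.update_self]
      have hj1 : (Function.update (Function.update (fun _ => 0) 0 t0) 1 t1 : ℕ → ℕ) 1 = t1 := by
        rw [Function.update_self]
      rw [hj0, hj1]
    simp only [inner]
    rw [outer]
    simp only [Finset.sum_range_succ, Finset.sum_range_zero, hval]
    norm_num
  | succ n IH =>
    intro M hM
    have hM2 : 2 ≤ M (n+2) := by
      have h := hM (n+2) (by omega)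
      have e : rr (n+1+2) (n+2) = 2 := by
        unfold rr
        rw [if_neg (by omega)]
        have e2 : n + 1 + 2 - (n + 2) = 1 := by omega
        rw [e2, pow_one]
      omega
    show (∑ t ∈ Finset.range (M (n+2)), boxSum (n+2) M
      (fun i => (cf (n+3) (Function.update i (n+2) t))^2)) = 4^(n+2)
    have hIHM : ∀ k < n + 2, rr (n+2) k ≤ M k := fun k hk =>
      le_trans (rr_mono hk) (hM k (by omega))
    have hIHM' : ∀ k < n + 2, rr (n+2) k ≤ M k - sh n k := by
      intro k hk
      have h1 := rr_add (n := n) hk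
      have h2 := hM k (by omega)
      have h3 : rr (n+1+2) k = rr (n+3) k := rfl
      omega
    have hshift : boxSum (n+2) M (fun i => (c2 n i)^2) = 4^(n+1) := by
      have e : (fun i => (c2 n i)^2) = (fun i =>
          if ∀ k < n + 2, sh n k ≤ i k then
            (fun j => (cf (n+2) j)^2) (fun k => i k - sh n k)
          else 0) := by
        funext i
        by_cases hall : ∀ k < n + 2, sh n k ≤ i k
        · rw [if_pos hall, c2_eq_of_le hall]
        · rw [if_neg hall]
          push_neg at hall
          obtain ⟨j, hj1, hj2⟩ := hall
          rw [c2_eq_zero hj1 hj2]; ring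
      rw [e, boxSum_shift (sh n) (n+2) M (fun j => (cf (n+2) j)^2)]
      exact IH _ hIHM'
    have hbase : boxSum (n+2) M (fun i => (cf (n+2) i)^2) = 4^(n+1) := IH _ hIHM
    have sq0 : ∀ a b : ℝ, a * b = 0 → (a + b)^2 = a^2 + b^2 := by
      intro a b h
      have : (a + b)^2 = a^2 + b^2 + 2*(a*b) := by ring
      rw [this, h]; ring
    have sq1 : ∀ a b : ℝ, a * b = 0 → (a - b)^2 = a^2 + b^2 := by
      intro a b h
      have : (a - b)^2 = a^2 + b^2 - 2*(a*b) := by ring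
      rw [this, h]; ring
    have G0 : boxSum (n+2) M (fun i => (cf (n+3) (Function.update i (n+2) 0))^2)
        = 4^(n+1) + 4^(n+1) := by
      have e : (fun i => (cf (n+3) (Function.update i (n+2) 0))^2)
          = (fun i => (cf (n+2) i)^2 + (c2 n i)^2) := by
        funext i
        have h1 : cf (n+3) (Function.update i (n+2) 0)
            = cf (n+2) (Function.update i (n+2) 0) + c2 n (Function.update i (n+2) 0) :=
          cf_rec0 (Function.update_self _ _ _)
        have h2 : cf (n+2) (Function.update i (n+2) 0) = cf (n+2) i :=
          cf_congr (fun k hk => Function.update_of_ne (by omega) _ _)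
        have h3 : c2 n (Function.update i (n+2) 0) = c2 n i :=
          c2_congr (fun k hk => Function.update_of_ne (by omega) _ _)
        rw [h1, h2, h3]
        exact sq0 _ _ (cf_mul_c2 n i)
      rw [e, boxSum_add, hbase, hshift]
    have G1 : boxSum (n+2) M (fun i => (cf (n+3) (Function.update i (n+2) 1))^2)
        = 4^(n+1) + 4^(n+1) := by
      have e : (fun i => (cf (n+3) (Function.update i (n+2) 1))^2)
          = (fun i => (cf (n+2) i)^2 + (c2 n i)^2) := by
        funext i
        have h1 : cf (n+3) (Function.update i (n+2) 1)
            = cf (n+2) (Function.update i (n+2) 1) - c2 n (Function.update i (n+2) 1) :=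
          cf_rec1 (Function.update_self _ _ _)
        have h2 : cf (n+2) (Function.update i (n+2) 1) = cf (n+2) i :=
          cf_congr (fun k hk => Function.update_of_ne (by omega) _ _)
        have h3 : c2 n (Function.update i (n+2) 1) = c2 n i :=
          c2_congr (fun k hk => Function.update_of_ne (by omega) _ _)
        rw [h1, h2, h3]
        exact sq1 _ _ (cf_mul_c2 n i)
      rw [e, boxSum_add, hbase, hshift]
    have Gbig : ∀ t, 2 ≤ t → boxSum (n+2) M
        (fun i => (cf (n+3) (Function.update i (n+2) t))^2) = 0 := by
      intro t ht
      have e : (fun i => (cf (n+3) (Function.update i (n+2) t))^2) = (fun _ => (0:ℝ)) := by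
        funext i
        rw [cf_rec_big (by rw [Function.update_self]; omega)]
        ring
      rw [e, boxSum_zero]
    have hsub : ∑ t ∈ Finset.range (M (n+2)), boxSum (n+2) M
        (fun i => (cf (n+3) (Function.update i (n+2) t))^2)
        = ∑ t ∈ Finset.range 2, boxSum (n+2) M
        (fun i => (cf (n+3) (Function.update i (n+2) t))^2) := by
      symm
      apply Finset.sum_subset (Finset.range_subset_range.mpr (by omega))
      intro t _ ht
      simp only [Finset.mem_range, not_lt] at ht
      exact Gbig t ht
    rw [hsub, Finset.sum_range_succ, Finset.sum_range_succ, Finset.sum_range_zero, G0, G1]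
    ring

/-! Bridge from `Fin` sums to `boxSum` -/

lemma bridge : ∀ (m N : ℕ) (F : (ℕ → ℕ) → ℝ),
    ∑ i : Fin m → Fin N, F (fun k => if h : k < m then (i ⟨k, h⟩ : ℕ) else 0)
      = boxSum m (fun _ => N) F := by
  intro m
  induction m with
  | zero =>
    intro N F
    have e : ∀ i : Fin 0 → Fin N,
        (fun k => if h : k < 0 then (i ⟨k, h⟩ : ℕ) else 0) = (fun _ => (0:ℕ)) := by
      intro i; funext k; rw [dif_neg (by omega)]
    rw [Fintype.sum_congr _ _ (fun i => by rw [e i])]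
    rw [Finset.sum_const]
    have hcard : Fintype.card (Fin 0 → Fin N) = 1 := by simp
    rw [Finset.card_univ, hcard, one_smul]
    rfl
  | succ m ih =>
    intro N F
    rw [← Fintype.sum_equiv (Fin.snocEquiv (fun _ => Fin N))
      (fun p => F (fun k => if h : k < m + 1 then
        ((Fin.snoc p.2 p.1 : Fin (m+1) → Fin N) ⟨k, h⟩ : ℕ) else 0))
      (fun i => F (fun k => if h : k < m + 1 then (i ⟨k, h⟩ : ℕ) else 0))
      (fun p => rfl)]
    rw [Fintype.sum_prod_type]
    show (∑ t : Fin N, ∑ j : Fin m → Fin N, _) = _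
    rw [boxSum]
    rw [← Fin.sum_univ_eq_sum_range
      (fun t => boxSum m (fun _ => N) (fun i => F (Function.update i m t))) N]
    apply Finset.sum_congr rfl
    intro t _
    rw [← ih N (fun i => F (Function.update i m (t : ℕ)))]
    apply Finset.sum_congr rfl
    intro j _
    apply congrArg
    funext k
    rcases Nat.lt_trichotomy k m with hk | hk | hk
    · rw [dif_pos (by omega), Function.update_of_ne (by omega), dif_pos hk]
      have e : (⟨k, by omega⟩ : Fin (m+1)) = Fin.castSucc ⟨k, hk⟩ := rfl
      rw [e, Fin.snoc_castSucc]
    · subst hk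
      rw [dif_pos (by omega), Function.update_self]
      have e : (⟨k, by omega⟩ : Fin (k+1)) = Fin.last k := rfl
      rw [e, Fin.snoc_last]
    · rw [dif_neg (by omega), Function.update_of_ne (by omega), dif_neg (by omega)]

/-- The coefficient-sum identity
`Σ |T_m(e_{i₁},…,e_{i_m})|^(2m/(m+1)) = 4^(m-1)` for every `m ≥ 2`. -/
theorem stmt_16 (m : ℕ) (hm : 2 ≤ m) :
    ∑ idx : Fin m → Fin (2 ^ (m - 1)),
      |Tm m (fun k i => if h : k < m then (if i = (idx ⟨k, h⟩ : ℕ) then 1 else 0) else 0)|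
        ^ ((2 * m : ℝ) / (m + 1)) = 4 ^ (m - 1) := by
  obtain ⟨n, rfl⟩ : ∃ n, m = n + 2 := ⟨m - 2, by omega⟩
  have hp' : ((2 * ((n + 2 : ℕ) : ℝ)) / (((n + 2 : ℕ) : ℝ) + 1)) ≠ 0 := by
    have h1 : (0:ℝ) < 2 * ((n + 2 : ℕ) : ℝ) := by positivity
    have h2 : (0:ℝ) < ((n + 2 : ℕ) : ℝ) + 1 := by positivity
    positivity
  have key : ∀ idx : Fin (n+2) → Fin (2 ^ (n + 2 - 1)),
      |Tm (n+2) (fun k i => if h : k < n + 2 then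
          (if i = (idx ⟨k, h⟩ : ℕ) then 1 else 0) else 0)|
        ^ ((2 * ((n + 2 : ℕ) : ℝ)) / (((n + 2 : ℕ) : ℝ) + 1))
      = (cf (n+2) (fun k => if h : k < n + 2 then (idx ⟨k, h⟩ : ℕ) else 0))^2 := by
    intro idx
    have hTm : Tm (n+2) (fun k j => if h : k < n + 2 then
        (if j = (idx ⟨k, h⟩ : ℕ) then 1 else 0) else 0)
        = cf (n+2) (fun k => if h : k < n + 2 then (idx ⟨k, h⟩ : ℕ) else 0) := by
      apply Tm_congr
      intro k hk
      funext j
      rw [dif_pos hk]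
      simp only [dd, dif_pos hk]
    rw [hTm]
    rcases cf_val n (fun k => if h : k < n + 2 then (idx ⟨k, h⟩ : ℕ) else 0) with h | h | h <;>
      rw [h]
    · rw [abs_zero, Real.zero_rpow hp']; norm_num
    · rw [abs_one, Real.one_rpow]; norm_num
    · rw [abs_neg, abs_one, Real.one_rpow]; norm_num
  rw [Fintype.sum_congr _ _ key]
  rw [bridge (n+2) (2 ^ (n + 2 - 1)) (fun i => (cf (n+2) i)^2)]
  have e1 : n + 2 - 1 = n + 1 := by omega
  rw [e1]
  rw [cf_count n (fun _ => 2 ^ (n+1)) (fun k hk => rr_le hk)]
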